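/- arXiv:1606.01190 — 3 statements merged into one kernel-verified Lean document; each statement's English description precedes it below -/
import Mathlib

section
/- If an N-player concave game over the feasible sets 𝒳_i satisfies the diagonal strict concavity condition — tr[(X' − X)(V(X') − V(X))] ≤ 0 for all X, X' ∈ 𝒳, with equality if and only if X = X' — then the game admits a unique Nash equilibrium. -/
open Matrix MeasureTheory Filter Topology
open scoped ComplexOrder

noncomputable section

/-- Square complex matrices of size `m`. -/
abbrev Mat (m : ℕ) := Matrix (Fin m) (Fin m) ℂ

/-- The spectral norm (largest absolute eigenvalue) of a Hermitian matrix. -/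
noncomputable def specNorm {m : ℕ} (A : Mat m) : ℝ :=
  if h : A.IsHermitian then ⨆ j, |h.eigenvalues j| else 0

/-- The nuclear (trace) norm: the sum of the absolute values of the eigenvalues. -/
noncomputable def nucNorm {m : ℕ} (A : Mat m) : ℝ :=
  if h : A.IsHermitian then ∑ j, |h.eigenvalues j| else 0

/-- A profile of actions, one positive-semidefinite matrix per player. -/
abbrev Profile (N : ℕ) (M : Fin N → ℕ) := ∀ i, Mat (M i)

/-- An `N`-player concave game: player `i` controls a Hermitian positive-semidefinite
matrix of size `M i` with nuclear norm at most `A i`; `u i` is the (continuous) utility of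
player `i`, concave in the player's own variable, and `V X i` is the individual payoff
gradient `∇_{X_i} u_i(X)` (a Hermitian matrix), characterized by directional derivatives. -/
structure ConcaveGame (N : ℕ) (M : Fin N → ℕ) where
  A : Fin N → ℝ
  A_pos : ∀ i, 0 < A i
  u : Fin N → Profile N M → ℝ
  V : Profile N M → ∀ i, Mat (M i)
  u_cont : ∀ i, Continuous (u i)
  V_cont : Continuous V
  V_herm : ∀ X i, (V X i).IsHermitian
  grad : ∀ (X : Profile N M) (i : Fin N) (Z : Mat (M i)), Z.IsHermitian →
    HasDerivAt (fun t : ℝ => u i (Function.update X i (X i + t • Z)))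
      ((V X i * Z).trace.re) 0
  u_concave : ∀ (i : Fin N) (X : Profile N M),
    ConcaveOn ℝ {Xi : Mat (M i) | Xi.PosSemidef ∧ nucNorm Xi ≤ A i}
      (fun Xi => u i (Function.update X i Xi))

namespace ConcaveGame

variable {N : ℕ} {M : Fin N → ℕ}

/-- The feasible action set `𝒳_i` of player `i`. -/
def feasible (G : ConcaveGame N M) (i : Fin N) : Set (Mat (M i)) :=
  {Xi | Xi.PosSemidef ∧ nucNorm Xi ≤ G.A i}

/-- Feasibility of a profile: `X ∈ 𝒳 = ∏ᵢ 𝒳ᵢ`. -/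
def FeasibleP (G : ConcaveGame N M) (X : Profile N M) : Prop :=
  ∀ i, X i ∈ G.feasible i

/-- The set of feasible profiles. -/
def feasibleSet (G : ConcaveGame N M) : Set (Profile N M) :=
  {X | G.FeasibleP X}

/-- Nash equilibrium: a feasible profile that is unilaterally stable. -/
def NashEq (G : ConcaveGame N M) (Xs : Profile N M) : Prop :=
  G.FeasibleP Xs ∧
    ∀ i, ∀ Xi ∈ G.feasible i, G.u i (Function.update Xs i Xi) ≤ G.u i Xs

/-- `tr[(X − X*) V(X)]`, summed over the players' blocks. -/
def relV (G : ConcaveGame N M) (Xs X : Profile N M) : ℝ :=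
  ∑ i, ((X i - Xs i) * G.V X i).trace.re

/-- Global variational stability of a profile `X*`. -/
def GloballyStable (G : ConcaveGame N M) (Xs : Profile N M) : Prop :=
  G.FeasibleP Xs ∧ ∀ X, G.FeasibleP X → G.relV Xs X ≤ 0

end ConcaveGame

namespace ConcaveGame

/-- Diagonal strict concavity (DSC): `tr[(X' − X)(V(X') − V(X))] ≤ 0` for all feasible
`X, X'`, with equality if and only if `X = X'`. -/
def DSC {N : ℕ} {M : Fin N → ℕ} (G : ConcaveGame N M) : Prop :=
  ∀ X X' : Profile N M, G.FeasibleP X → G.FeasibleP X' →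
    (∑ i, ((X' i - X i) * (G.V X' i - G.V X i)).trace.re ≤ 0 ∧
      (∑ i, ((X' i - X i) * (G.V X' i - G.V X i)).trace.re = 0 ↔ X = X'))

end ConcaveGame

/-! Rosen's argument, read as a monotone variational inequality. Pair a profile `X` with the
payoff gradient through `F X = tr[· V(X)]`; diagonal strict concavity says that `F` is strictly
anti-monotone on the compact convex set `𝒳`. A finite-intersection argument, whose finite step is
the minimax theorem on a simplex, yields a weak (Minty) solution `tr[(X − X*) V(X)] ≤ 0` for all
`X ∈ 𝒳`; continuity of `V` turns it into a strong solution `tr[(X − X*) V(X*)] ≤ 0`. By concavity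
of each `u_i` in its own variable, strong solutions are exactly the Nash equilibria, and strict
monotonicity leaves room for only one. -/

theorem Matrix.exists_mem_stdSimplex_mulVec_nonneg {k : Type*} [Fintype k] [Nonempty k]
    (B : Matrix k k ℝ) (hB : ∀ a ∈ stdSimplex ℝ k, 0 ≤ a ⬝ᵥ B *ᵥ a) :
    ∃ l ∈ stdSimplex ℝ k, 0 ≤ B *ᵥ l := by
  classical
  have hne : (stdSimplex ℝ k).Nonempty := ⟨_, single_mem_stdSimplex ℝ (Classical.arbitrary k)⟩
  have hconv := convex_stdSimplex ℝ k
  have hcpt := isCompact_stdSimplex ℝ k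
  -- a saddle point `(a, l)` of `x ⬝ᵥ B *ᵥ y` gives `x ⬝ᵥ B *ᵥ l ≥ a ⬝ᵥ B *ᵥ a ≥ 0`
  obtain ⟨a, ha, l, hl, hsaddle⟩ := Sion.exists_isSaddlePointOn (f := fun x y => x ⬝ᵥ B *ᵥ y)
    hne hconv hcpt
    (fun y _ => (by fun_prop : Continuous (· ⬝ᵥ B *ᵥ y)).lowerSemicontinuous
      |>.lowerSemicontinuousOn _)
    (fun y _ => (((dotProductBilin ℝ ℝ).flip (B *ᵥ y)).convexOn hconv).quasiconvexOn)
    hconv hne hcpt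
    (fun x _ => (by fun_prop : Continuous (x ⬝ᵥ B *ᵥ ·)).upperSemicontinuous
      |>.upperSemicontinuousOn _)
    (fun x _ => ((dotProductBilin ℝ ℝ x ∘ₗ B.mulVecLin).concaveOn hconv).quasiconcaveOn)
  refine ⟨l, hl, fun p => ?_⟩
  simpa using (hB a ha).trans (hsaddle _ (single_mem_stdSimplex ℝ p) a ha)

theorem Matrix.dotProduct_mulVec_self_nonneg {k : Type*} [Fintype k] {B : Matrix k k ℝ}
    (hB : ∀ p q, 0 ≤ B p q + B q p) {a : k → ℝ} (ha : 0 ≤ a) : 0 ≤ a ⬝ᵥ B *ᵥ a := by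
  have hsymm : a ⬝ᵥ B *ᵥ a = ∑ p, ∑ q, a p * B q p * a q := by
    simp only [dotProduct, mulVec, Finset.mul_sum]
    rw [Finset.sum_comm]
    exact Finset.sum_congr rfl fun _ _ => Finset.sum_congr rfl fun _ _ => by ring
  have hsum : 2 * (a ⬝ᵥ B *ᵥ a) = ∑ p, ∑ q, a p * a q * (B p q + B q p) := by
    rw [two_mul]
    nth_rw 2 [hsymm]
    simp only [dotProduct, mulVec, Finset.mul_sum, ← Finset.sum_add_distrib]
    exact Finset.sum_congr rfl fun _ _ => Finset.sum_congr rfl fun _ _ => by ring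
  have : 0 ≤ 2 * (a ⬝ᵥ B *ᵥ a) := hsum ▸ Finset.sum_nonneg fun p _ =>
    Finset.sum_nonneg fun q _ => mul_nonneg (mul_nonneg (ha p) (ha q)) (hB p q)
  linarith

section VariationalInequality

variable {E : Type*} [AddCommGroup E] [Module ℝ E] [TopologicalSpace E]

/-- The signs are those of a maximisation problem: `F` plays the role of a payoff gradient. -/
def IsVISolution (K : Set E) (F : E → StrongDual ℝ E) (x : E) : Prop :=
  x ∈ K ∧ ∀ y ∈ K, F x (y - x) ≤ 0

def IsMintySolution (K : Set E) (F : E → StrongDual ℝ E) (x : E) : Prop :=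
  x ∈ K ∧ ∀ y ∈ K, F y (y - x) ≤ 0

variable {K : Set E} {F : E → StrongDual ℝ E}

theorem exists_mem_forall_apply_sub_nonpos {ι : Type*} [Fintype ι] (hK : Convex ℝ K)
    (hne : K.Nonempty) (hF : ∀ x ∈ K, ∀ y ∈ K, (F y - F x) (y - x) ≤ 0)
    (y : ι → E) (hy : ∀ i, y i ∈ K) : ∃ z ∈ K, ∀ i, F (y i) (y i - z) ≤ 0 := by
  cases isEmpty_or_nonempty ι
  · exact hne.imp fun z hz => ⟨hz, isEmptyElim⟩
  set B : Matrix ι ι ℝ := fun p q => F (y p) (y q - y p)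
  have hB : ∀ p q, 0 ≤ B p q + B q p := fun p q => by
    have := hF _ (hy p) _ (hy q)
    simp only [B, _root_.sub_apply, ← neg_sub (y q) (y p), map_neg] at this ⊢
    linarith
  obtain ⟨l, hl, hBl⟩ := B.exists_mem_stdSimplex_mulVec_nonneg fun a ha =>
    dotProduct_mulVec_self_nonneg hB ha.1
  refine ⟨∑ q, l q • y q, hK.sum_mem (fun q _ => hl.1 q) hl.2 fun q _ => hy q, fun p => ?_⟩
  have hdiff : y p - ∑ q, l q • y q = -∑ q, l q • (y q - y p) := by
    simp only [smul_sub, Finset.sum_sub_distrib, ← Finset.sum_smul, hl.2, one_smul, neg_sub]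
  have : F (y p) (y p - ∑ q, l q • y q) = -(B *ᵥ l) p := by
    simp only [hdiff, map_neg, map_sum, map_smul, smul_eq_mul, mulVec, dotProduct, B, mul_comm]
  rw [this, neg_nonpos]
  exact hBl p

theorem exists_isMintySolution [ContinuousSub E] (hK : IsCompact K) (hKc : Convex ℝ K)
    (hne : K.Nonempty) (hF : ∀ x ∈ K, ∀ y ∈ K, (F y - F x) (y - x) ≤ 0) :
    ∃ x, IsMintySolution K F x := by
  obtain ⟨x, hxK, hx⟩ := hK.inter_iInter_nonempty (fun y : K => {z | F y (y - z) ≤ 0})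
    (fun y => isClosed_le (by fun_prop) continuous_const) fun u => by
      obtain ⟨z, hzK, hz⟩ := exists_mem_forall_apply_sub_nonpos hKc hne hF
        (fun y : u => (y : K).1) fun y => (y : K).2
      exact ⟨z, hzK, Set.mem_iInter₂.2 fun y hy => hz ⟨y, hy⟩⟩
  exact ⟨x, hxK, fun y hy => Set.mem_iInter.1 hx ⟨y, hy⟩⟩

theorem IsMintySolution.isVISolution [ContinuousAdd E] [ContinuousSMul ℝ E] {x : E}
    (hKc : Convex ℝ K) (hF : ∀ v, Continuous fun z => F z v) (h : IsMintySolution K F x) :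
    IsVISolution K F x := by
  refine ⟨h.1, fun y hy => ?_⟩
  have hseg : ∀ t ∈ Set.Ioc (0 : ℝ) 1, F (x + t • (y - x)) (y - x) ≤ 0 := fun t ht => by
    have := h.2 _ (hKc.add_smul_sub_mem h.1 hy ⟨ht.1.le, ht.2⟩)
    rw [add_sub_cancel_left, map_smul, smul_eq_mul] at this
    exact nonpos_of_mul_nonpos_right this ht.1
  have hcont : Continuous fun t : ℝ => F (x + t • (y - x)) (y - x) :=
    (hF _).comp (by fun_prop)
  simpa using le_of_tendsto ((hcont.tendsto 0).mono_left nhdsWithin_le_nhds)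
    (Filter.eventually_of_mem (Ioc_mem_nhdsGT zero_lt_one) hseg)

theorem IsVISolution.eq {x y : E}
    (hF : ∀ x ∈ K, ∀ y ∈ K, 0 ≤ (F y - F x) (y - x) → x = y)
    (hx : IsVISolution K F x) (hy : IsVISolution K F y) : x = y := by
  refine hF x hx.1 y hy.1 ?_
  have h₁ := hx.2 y hy.1
  have h₂ := hy.2 x hx.1
  rw [← neg_sub y x, map_neg] at h₂
  rw [_root_.sub_apply]
  linarith

end VariationalInequality

section Segment

variable {E : Type*} [AddCommGroup E] [Module ℝ E] {S : Set E} {g : E → ℝ} {x y : E} {d : ℝ}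

theorem ConcaveOn.sub_le_of_hasDerivAt_segment (hg : ConcaveOn ℝ S g) (hx : x ∈ S) (hy : y ∈ S)
    (hd : HasDerivAt (fun t : ℝ => g (x + t • (y - x))) d 0) : g y - g x ≤ d := by
  have hline : ConcaveOn ℝ (Set.Icc 0 1) fun t : ℝ => g (x + t • (y - x)) := by
    refine ((hg.comp_affineMap (AffineMap.lineMap x y)).subset (fun t ht => ?_)
      (convex_Icc 0 1)).congr fun t _ => ?_
    · simpa [AffineMap.lineMap_apply_module', add_comm] using
        hg.1.add_smul_sub_mem hx hy ht
    · simp [AffineMap.lineMap_apply_module', add_comm]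
  simpa [slope_def_field] using hline.slope_le_of_hasDerivAt (by simp) (by simp) zero_lt_one hd

theorem IsMaxOn.hasDerivAt_segment_nonpos (h : IsMaxOn g S x) (hS : Convex ℝ S) (hx : x ∈ S)
    (hy : y ∈ S) (hd : HasDerivAt (fun t : ℝ => g (x + t • (y - x))) d 0) : d ≤ 0 := by
  have hline : IsMaxOn (fun t : ℝ => g (x + t • (y - x))) (Set.Icc 0 1) 0 := fun t ht => by
    simpa using h (hS.add_smul_sub_mem hx hy ht)
  simpa using hline.localize.hasFDerivWithinAt_nonpos hd.hasDerivWithinAt.hasFDerivWithinAt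
    (mem_posTangentConeAt_of_segment_subset (y := 1) (by simp [segment_eq_Icc]))

end Segment

theorem forall_mem_univ_pi_sum_nonpos_iff {ι : Type*} [Fintype ι] {α : ι → Type*}
    {K : ∀ i, Set (α i)} {x : ∀ i, α i} (hx : x ∈ Set.univ.pi K) (c : ∀ i, α i → ℝ)
    (hc : ∀ i, c i (x i) = 0) :
    (∀ y ∈ Set.univ.pi K, ∑ i, c i (y i) ≤ 0) ↔ ∀ i, ∀ z ∈ K i, c i z ≤ 0 := by
  classical
  refine ⟨fun h i z hz => ?_, fun h y hy => Finset.sum_nonpos fun i _ => h i _ (hy i trivial)⟩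
  have := h _ ((Set.update_mem_pi_iff_of_mem hx).2 fun _ => hz)
  rwa [Finset.sum_eq_single i (fun j _ hj => by rw [Function.update_of_ne hj, hc]) (by simp),
    Function.update_self] at this

theorem Matrix.PosSemidef.norm_apply_sq_le {n : Type*} {X : Matrix n n ℂ} (hX : X.PosSemidef)
    (a b : n) : ‖X a b‖ ^ 2 ≤ (X a a).re * (X b b).re := by
  have hdet := (hX.submatrix ![a, b]).det_nonneg
  rw [det_fin_two] at hdet
  have hba : X b a = star (X a b) := (hX.1.apply b a).symm
  have him : (X a a).im = 0 := (Complex.le_def.1 hX.diag_nonneg).2.symm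
  have hre := (Complex.le_def.1 hdet).1
  simp [hba, Complex.mul_re, him] at hre
  rwa [Complex.sq_norm, Complex.normSq_apply]

theorem Matrix.PosSemidef.norm_apply_le_trace_re {n : Type*} [Fintype n] {X : Matrix n n ℂ}
    (hX : X.PosSemidef) (a b : n) : ‖X a b‖ ≤ X.trace.re := by
  have hdiag : ∀ c, 0 ≤ (X c c).re := fun c => (Complex.le_def.1 hX.diag_nonneg).1
  have hle : ∀ c, (X c c).re ≤ X.trace.re := fun c => by
    rw [trace, Complex.re_sum]
    exact Finset.single_le_sum (fun c _ => hdiag c) (Finset.mem_univ c)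
  refine (pow_le_pow_iff_left₀ (norm_nonneg _) ((hdiag a).trans (hle a)) two_ne_zero).1 ?_
  exact (hX.norm_apply_sq_le a b).trans
    (by nlinarith [hdiag a, hdiag b, hle a, hle b] : _ ≤ X.trace.re ^ 2)

theorem Matrix.isClosed_setOf_posSemidef {n 𝕜 : Type*} [Fintype n] [RCLike 𝕜] :
    IsClosed {X : Matrix n n 𝕜 | X.PosSemidef} := by
  simp only [posSemidef_iff_dotProduct_mulVec, Set.ofPred_and, Set.ofPred_forall]
  exact (isClosed_eq (by fun_prop) continuous_id).inter
    (isClosed_iInter fun x => isClosed_le continuous_const (by fun_prop))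

theorem Matrix.PosSemidef.nucNorm_eq {m : ℕ} {X : Mat m} (hX : X.PosSemidef) :
    nucNorm X = X.trace.re := by
  rw [nucNorm, dif_pos hX.1, hX.1.trace_eq_sum_eigenvalues, Complex.re_sum]
  exact Finset.sum_congr rfl fun j _ => by simp [abs_of_nonneg (hX.eigenvalues_nonneg j)]

def tracePairing {N : ℕ} {M : Fin N → ℕ} (W : Profile N M) : StrongDual ℝ (Profile N M) where
  toFun X := ∑ i, (X i * W i).trace.re
  map_add' X Y := by simp [add_mul, Finset.sum_add_distrib]
  map_smul' c X := by simp [Finset.mul_sum]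
  cont := by fun_prop

theorem tracePairing_sub_apply {N : ℕ} {M : Fin N → ℕ} (W W' X : Profile N M) :
    (tracePairing W - tracePairing W') X = ∑ i, (X i * (W i - W' i)).trace.re := by
  simp [tracePairing, mul_sub, Finset.sum_sub_distrib]

theorem continuous_tracePairing_apply {N : ℕ} {M : Fin N → ℕ} (X : Profile N M) :
    Continuous fun W : Profile N M => tracePairing W X := by
  simp only [tracePairing, ContinuousLinearMap.coe_mk', LinearMap.coe_mk, AddHom.coe_mk]
  fun_prop

namespace ConcaveGame

variable {N : ℕ} {M : Fin N → ℕ} (G : ConcaveGame N M) {Xs : Profile N M}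

theorem mem_feasible_iff {i : Fin N} {Xi : Mat (M i)} :
    Xi ∈ G.feasible i ↔ Xi.PosSemidef ∧ Xi.trace.re ≤ G.A i :=
  and_congr_right fun h => by rw [h.nucNorm_eq]

theorem convex_feasible (i : Fin N) : Convex ℝ (G.feasible i) := by
  intro X hX Y hY a b ha hb hab
  rw [mem_feasible_iff] at *
  refine ⟨(hX.1.smul ha).add (hY.1.smul hb), ?_⟩
  simp only [trace_add, trace_smul, Complex.add_re, Complex.smul_re, smul_eq_mul]
  calc a * X.trace.re + b * Y.trace.re ≤ a * G.A i + b * G.A i := by gcongr <;> tauto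
    _ = G.A i := by rw [← add_mul, hab, one_mul]

theorem isCompact_feasible (i : Fin N) : IsCompact (G.feasible i) := by
  have hclosed : IsClosed (G.feasible i) := by
    rw [show G.feasible i = {X | X.PosSemidef} ∩ {X | X.trace.re ≤ G.A i} from
      Set.ext fun _ => G.mem_feasible_iff]
    exact isClosed_setOf_posSemidef.inter (isClosed_le (by fun_prop) continuous_const)
  refine (isCompact_univ_pi fun a => isCompact_univ_pi fun b =>
    isCompact_closedBall (0 : ℂ) (G.A i)).of_isClosed_subset hclosed
      fun (X : Mat (M i)) hX a _ b _ => ?_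
  obtain ⟨hpsd, htr⟩ := G.mem_feasible_iff.1 hX
  simpa using (hpsd.norm_apply_le_trace_re a b).trans htr

theorem feasibleSet_eq_pi : G.feasibleSet = Set.univ.pi G.feasible := by
  ext X
  simp [feasibleSet, FeasibleP]

theorem isCompact_feasibleSet : IsCompact G.feasibleSet :=
  G.feasibleSet_eq_pi ▸ isCompact_univ_pi G.isCompact_feasible

theorem convex_feasibleSet : Convex ℝ G.feasibleSet :=
  G.feasibleSet_eq_pi ▸ convex_pi fun i _ => G.convex_feasible i

theorem zero_mem_feasibleSet : 0 ∈ G.feasibleSet := fun i =>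
  G.mem_feasible_iff.2 ⟨PosSemidef.zero, by simpa using (G.A_pos i).le⟩

theorem isMaxOn_update_iff (hXs : G.FeasibleP Xs) (i : Fin N) :
    IsMaxOn (fun Xi => G.u i (Function.update Xs i Xi)) (G.feasible i) (Xs i) ↔
      ∀ Xi ∈ G.feasible i, ((Xi - Xs i) * G.V Xs i).trace.re ≤ 0 := by
  have hd : ∀ Xi ∈ G.feasible i,
      HasDerivAt (fun t : ℝ => G.u i (Function.update Xs i (Xs i + t • (Xi - Xs i))))
        ((Xi - Xs i) * G.V Xs i).trace.re 0 := fun Xi hXi => by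
    rw [trace_mul_comm]
    exact G.grad Xs i _ (hXi.1.isHermitian.sub (hXs i).1.isHermitian)
  refine ⟨fun h Xi hXi =>
    h.hasDerivAt_segment_nonpos (G.convex_feasible i) (hXs i) hXi (hd Xi hXi),
    fun h => isMaxOn_iff.2 fun Xi hXi => ?_⟩
  have := (G.u_concave i Xs).sub_le_of_hasDerivAt_segment (hXs i) hXi (hd Xi hXi)
  linarith [h Xi hXi]

theorem nashEq_iff_isVISolution :
    G.NashEq Xs ↔ IsVISolution G.feasibleSet (fun X => tracePairing (G.V X)) Xs := by
  have hnash : G.NashEq Xs ↔ Xs ∈ Set.univ.pi G.feasible ∧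
      ∀ i, IsMaxOn (fun Xi => G.u i (Function.update Xs i Xi)) (G.feasible i) (Xs i) := by
    simp only [NashEq, FeasibleP, Set.mem_univ_pi, isMaxOn_iff, Function.update_eq_self]
  rw [hnash, IsVISolution, feasibleSet_eq_pi]
  refine and_congr_right fun hXs => ?_
  rw [forall_congr' (G.isMaxOn_update_iff (Set.mem_univ_pi.1 hXs))]
  exact (forall_mem_univ_pi_sum_nonpos_iff hXs
    (fun i Xi => ((Xi - Xs i) * G.V Xs i).trace.re) (by simp)).symm

end ConcaveGame

/-- Rosen. If an `N`-player concave game satisfies the diagonal strict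
concavity condition, then it admits a unique Nash equilibrium. -/
theorem dsc_implies_unique_nash {N : ℕ} {M : Fin N → ℕ} (G : ConcaveGame N M)
    (hDSC : G.DSC) : ∃! Xs : Profile N M, G.NashEq Xs := by
  set F : Profile N M → StrongDual ℝ (Profile N M) := fun X => tracePairing (G.V X)
  have hF : ∀ X Y, (F Y - F X) (Y - X) = ∑ i, ((Y i - X i) * (G.V Y i - G.V X i)).trace.re :=
    fun X Y => tracePairing_sub_apply _ _ _
  have hmono : ∀ X ∈ G.feasibleSet, ∀ Y ∈ G.feasibleSet, (F Y - F X) (Y - X) ≤ 0 :=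
    fun X hX Y hY => hF X Y ▸ (hDSC X Y hX hY).1
  have hstrict : ∀ X ∈ G.feasibleSet, ∀ Y ∈ G.feasibleSet, 0 ≤ (F Y - F X) (Y - X) → X = Y :=
    fun X hX Y hY h => (hDSC X Y hX hY).2.1 (hF X Y ▸ le_antisymm (hmono X hX Y hY) h)
  obtain ⟨Xs, hXs⟩ := exists_isMintySolution G.isCompact_feasibleSet G.convex_feasibleSet
    ⟨0, G.zero_mem_feasibleSet⟩ hmono
  have hVI := hXs.isVISolution G.convex_feasibleSet fun W =>
    (continuous_tracePairing_apply W).comp G.V_cont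
  exact ⟨Xs, G.nashEq_iff_isVISolution.2 hVI,
    fun Y hY => (G.nashEq_iff_isVISolution.1 hY).eq hstrict hVI⟩
end
end

section
/- For every X ∈ 𝒟 and every Hermitian matrix Y, the Fenchel coupling satisfies F(X, Y) ≥ 0, with equality if and only if X = Γ(Y). -/
open Matrix MeasureTheory Filter Topology
open scoped ComplexOrder

noncomputable section

/-- The matrix exponential `exp(A) = ∑ₖ Aᵏ/k!`. -/
noncomputable def matExp {m : ℕ} (A : Mat m) : Mat m :=
  ∑' k : ℕ, ((k.factorial : ℂ)⁻¹) • A ^ k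

/-- The matrix logarithm of a Hermitian matrix, via its spectral decomposition
(junk value `0` on non-Hermitian matrices). -/
noncomputable def matLog {m : ℕ} (A : Mat m) : Mat m :=
  if h : A.IsHermitian then
    (h.eigenvectorUnitary : Mat m) *
      Matrix.diagonal (fun i => (Real.log (h.eigenvalues i) : ℂ)) *
      star (h.eigenvectorUnitary : Mat m)
  else 0

/-- The spectrahedron `𝒟 = {X : X ⪰ 0, tr X ≤ 1}`. -/
def spectra (m : ℕ) : Set (Mat m) :=
  {X | X.PosSemidef ∧ X.trace.re ≤ 1}

/-- The modified von Neumann entropy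
`h(X) = tr[X log X] + (1 − tr X) log(1 − tr X)` (the conventions `0 log 0 = 0` are built
into the spectral definition of `matLog` and into `Real.log 0 = 0`). -/
noncomputable def vnEnt {m : ℕ} (X : Mat m) : ℝ :=
  ((X * matLog X).trace).re + (1 - X.trace.re) * Real.log (1 - X.trace.re)

/-- The convex conjugate `h*(Y) = max_{X ∈ 𝒟} {tr(YX) − h(X)}` of the modified von
Neumann entropy over the spectrahedron. -/
noncomputable def hstar {m : ℕ} (Y : Mat m) : ℝ :=
  sSup ((fun X => ((Y * X).trace).re - vnEnt X) '' spectra m)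

/-- The exponential map `Γ(Y) = exp(Y)/(1 + tr(exp Y))`. -/
noncomputable def Gam {m : ℕ} (Y : Mat m) : Mat m :=
  (1 + ((matExp Y).trace).re)⁻¹ • matExp Y

/-- The Fenchel coupling `F(X, Y) = h(X) + h*(Y) − tr(YX)`. -/
noncomputable def Fen {m : ℕ} (X Y : Mat m) : ℝ :=
  vnEnt X + hstar Y - ((Y * X).trace).re

/-!
With `Z = 1 + tr exp Y` one has `Γ(Y) = exp Y / Z`, hence `log Γ(Y) = Y - log Z` and
`1 - tr Γ(Y) = 1/Z`. This turns `log Z - (tr (Y X) - h(X))` into the sum of the relative entropy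
`D(X ‖ Γ(Y)) = tr (X log X - X log Γ(Y) - X + Γ(Y))` and its scalar analogue for the weights
`1 - tr X` and `1/Z`. Both are nonnegative, and the first vanishes only at `X = Γ(Y)` (Klein's
inequality: in eigenbases `(uᵢ)` of `A` and `(vⱼ)` of `B`,
`D(A ‖ B) = ∑ᵢⱼ |⟨uᵢ, vⱼ⟩|² bⱼ klFun (aᵢ / bⱼ)`, and `klFun ≥ 0` vanishes only at `1`).
So `h*(Y) = log Z` is attained at `Γ(Y)`, and `F(X, Y)` is exactly that gap.
-/

open Finset InformationTheory

lemma InformationTheory.mul_klFun_div {a b : ℝ} (hb : b ≠ 0) :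
    b * klFun (a / b) = a * Real.log a - a * Real.log b - a + b := by
  rcases eq_or_ne a 0 with rfl | ha
  · simp [klFun]
  · rw [klFun, Real.log_div ha hb]
    field_simp
    ring

lemma InformationTheory.mul_klFun_div_nonneg {a b : ℝ} (ha : 0 ≤ a) (hb : 0 ≤ b) :
    0 ≤ b * klFun (a / b) :=
  mul_nonneg hb (klFun_nonneg (div_nonneg ha hb))

namespace Matrix

variable {𝕜 n : Type*} [RCLike 𝕜] [Fintype n] [DecidableEq n] {A B : Matrix n n 𝕜}

lemma trace_conj_diagonal_mul_conj_diagonal (U V : Matrix n n 𝕜) (d e : n → 𝕜) :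
    (U * diagonal d * star U * (V * diagonal e * star V)).trace =
      ∑ i, ∑ j, d i * e j * (‖(star U * V) i j‖ ^ 2 : 𝕜) := by
  have hcyc : (U * diagonal d * star U * (V * diagonal e * star V)).trace =
      (diagonal d * (star U * V) * diagonal e * star (star U * V)).trace := by
    simp only [star_mul, star_star, Matrix.mul_assoc]
    rw [trace_mul_comm U]
    simp only [Matrix.mul_assoc]
  rw [hcyc]
  refine sum_congr rfl fun i _ => ?_
  rw [diag_apply, mul_apply]
  refine sum_congr rfl fun j _ => ?_
  rw [mul_diagonal, diagonal_mul, star_apply, RCLike.star_def, ← RCLike.mul_conj]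
  ring

namespace IsHermitian

lemma trace_cfc (hA : A.IsHermitian) (f : ℝ → ℝ) :
    (cfc f A).trace = ∑ i, (f (hA.eigenvalues i) : 𝕜) := by
  rw [hA.cfc_eq, IsHermitian.cfc, Unitary.conjStarAlgAut_apply, trace_mul_cycle,
    Unitary.star_mul_self_of_mem (SetLike.coe_mem _), one_mul, trace_diagonal]
  rfl

lemma re_trace_cfc (hA : A.IsHermitian) (f : ℝ → ℝ) :
    RCLike.re (cfc f A).trace = ∑ i, f (hA.eigenvalues i) := by
  simp [hA.trace_cfc]

open scoped MatrixOrder in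
lemma posDef_cfc (hA : A.IsHermitian) {f : ℝ → ℝ} (hf : ∀ x, 0 < f x) : (cfc f A).PosDef :=
  isStrictlyPositive_iff_posDef.mp <| (cfc_isStrictlyPositive_iff f A
    (A.finite_real_spectrum.continuousOn f) hA.isSelfAdjoint).mpr fun x _ => hf x

noncomputable def eigenOverlap (hA : A.IsHermitian) (hB : B.IsHermitian) (i j : n) : ℝ :=
  ‖(star (hA.eigenvectorUnitary : Matrix n n 𝕜) * (hB.eigenvectorUnitary : Matrix n n 𝕜)) i j‖ ^ 2

lemma re_trace_cfc_mul_cfc (hA : A.IsHermitian) (hB : B.IsHermitian) (f g : ℝ → ℝ) :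
    RCLike.re (cfc f A * cfc g B).trace =
      ∑ i, ∑ j, hA.eigenOverlap hB i j * f (hA.eigenvalues i) * g (hB.eigenvalues j) := by
  rw [hA.cfc_eq, hB.cfc_eq, IsHermitian.cfc, IsHermitian.cfc, Unitary.conjStarAlgAut_apply,
    Unitary.conjStarAlgAut_apply, trace_conj_diagonal_mul_conj_diagonal]
  simp only [map_sum, Function.comp_apply, eigenOverlap]
  refine sum_congr rfl fun i _ => sum_congr rfl fun j _ => ?_
  norm_cast
  ring

lemma eq_of_eigenOverlap_ne_zero (hA : A.IsHermitian) (hB : B.IsHermitian)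
    (h : ∀ i j, hA.eigenOverlap hB i j ≠ 0 → hA.eigenvalues i = hB.eigenvalues j) : A = B := by
  set U : Matrix n n 𝕜 := hA.eigenvectorUnitary.val
  set V : Matrix n n 𝕜 := hB.eigenvectorUnitary.val
  set Da : Matrix n n 𝕜 := diagonal (RCLike.ofReal ∘ hA.eigenvalues)
  set Db : Matrix n n 𝕜 := diagonal (RCLike.ofReal ∘ hB.eigenvalues)
  have hDW : Da * (star U * V) = (star U * V) * Db := by
    ext i j
    rw [diagonal_mul, mul_diagonal]
    by_cases hW : (star U * V) i j = 0
    · simp [hW]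
    · rw [Function.comp_apply, Function.comp_apply, h i j (by simpa [eigenOverlap] using hW),
        mul_comm]
  have hU : U * star U = 1 := Unitary.mul_star_self_of_mem (SetLike.coe_mem _)
  have hV : V * star V = 1 := Unitary.mul_star_self_of_mem (SetLike.coe_mem _)
  calc A = U * Da * star U := hA.spectral_theorem
    _ = U * (Da * (star U * V)) * star V := by simp only [Matrix.mul_assoc, hV, Matrix.mul_one]
    _ = U * (star U * V * Db) * star V := by rw [hDW]
    _ = V * Db * star V := by simp only [← Matrix.mul_assoc, hU, Matrix.one_mul]
    _ = B := hB.spectral_theorem.symm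

end IsHermitian

-- Umegaki's relative entropy, corrected by `tr (B - A)` so that it is nonnegative also for
-- unnormalised `A` and `B`.
noncomputable def relEntropy (A B : Matrix n n 𝕜) : ℝ :=
  RCLike.re (A * cfc Real.log A - A * cfc Real.log B - A + B).trace

lemma relEntropy_self (A : Matrix n n 𝕜) : relEntropy A A = 0 := by
  simp [relEntropy]

lemma relEntropy_eq_sum_eigenOverlap (hA : A.IsHermitian) (hB : B.PosDef) :
    relEntropy A B = ∑ i, ∑ j, hA.eigenOverlap hB.isHermitian i j *
      (hB.isHermitian.eigenvalues j * klFun (hA.eigenvalues i / hB.isHermitian.eigenvalues j)) := by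
  have hA' := hA.isSelfAdjoint
  have hB' := hB.isHermitian.isSelfAdjoint
  -- each term is a pairing `tr (f(A) g(B))`, with `f = 1` or `g = 1` where a factor is missing
  have t1 := hA.re_trace_cfc_mul_cfc hB.isHermitian (fun x => x * Real.log x) (fun _ => 1)
  have t2 := hA.re_trace_cfc_mul_cfc hB.isHermitian (fun x => x) Real.log
  have t3 := hA.re_trace_cfc_mul_cfc hB.isHermitian (fun x => x) (fun _ => 1)
  have t4 := hA.re_trace_cfc_mul_cfc hB.isHermitian (fun _ => 1) (fun x => x)
  rw [cfc_const_one ℝ B, Matrix.mul_one, cfc_mul (fun x : ℝ => x) Real.log A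
    (A.finite_real_spectrum.continuousOn _) (A.finite_real_spectrum.continuousOn _),
    cfc_id' ℝ A] at t1
  rw [cfc_id' ℝ A] at t2
  rw [cfc_const_one ℝ B, Matrix.mul_one, cfc_id' ℝ A] at t3
  rw [cfc_const_one ℝ A, Matrix.one_mul, cfc_id' ℝ B] at t4
  rw [relEntropy, trace_add, trace_sub, trace_sub, map_add, map_sub, map_sub, t1, t2, t3, t4]
  simp only [← sum_sub_distrib, ← sum_add_distrib]
  refine sum_congr rfl fun i _ => sum_congr rfl fun j _ => ?_
  rw [mul_klFun_div (hB.eigenvalues_pos j).ne']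
  ring

lemma eigenOverlap_mul_klFun_nonneg (hA : A.PosSemidef) (hB : B.PosDef) (i j : n) :
    0 ≤ hA.isHermitian.eigenOverlap hB.isHermitian i j * (hB.isHermitian.eigenvalues j *
      klFun (hA.isHermitian.eigenvalues i / hB.isHermitian.eigenvalues j)) :=
  mul_nonneg (sq_nonneg _) (mul_klFun_div_nonneg (hA.eigenvalues_nonneg i) (hB.eigenvalues_pos j).le)

lemma relEntropy_nonneg (hA : A.PosSemidef) (hB : B.PosDef) : 0 ≤ relEntropy A B := by
  rw [relEntropy_eq_sum_eigenOverlap hA.isHermitian hB]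
  exact sum_nonneg fun i _ => sum_nonneg fun j _ => eigenOverlap_mul_klFun_nonneg hA hB i j

theorem relEntropy_eq_zero_iff (hA : A.PosSemidef) (hB : B.PosDef) :
    relEntropy A B = 0 ↔ A = B := by
  refine ⟨fun h => ?_, fun h => h ▸ relEntropy_self A⟩
  have hterm := eigenOverlap_mul_klFun_nonneg hA hB
  rw [relEntropy_eq_sum_eigenOverlap hA.isHermitian hB,
    sum_eq_zero_iff_of_nonneg fun i _ => sum_nonneg fun j _ => hterm i j] at h
  refine hA.isHermitian.eq_of_eigenOverlap_ne_zero hB.isHermitian fun i j hij => ?_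
  have hb := hB.eigenvalues_pos j
  have hij' := (sum_eq_zero_iff_of_nonneg fun j _ => hterm i j).mp (h i (mem_univ i)) j (mem_univ j)
  rwa [mul_eq_zero, or_iff_right hij, mul_eq_zero, or_iff_right hb.ne',
    klFun_eq_zero_iff (div_nonneg (hA.eigenvalues_nonneg i) hb.le),
    div_eq_one_iff_eq hb.ne'] at hij'

end Matrix

section Gibbs

variable {m : ℕ} {X Y : Mat m}

lemma matExp_eq_cfc (hY : Y.IsHermitian) : matExp Y = cfc Real.exp Y := by
  have hexp : matExp Y = NormedSpace.exp Y := by rw [NormedSpace.exp_eq_tsum ℂ]; rfl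
  have hdiag : NormedSpace.exp (diagonal (RCLike.ofReal ∘ hY.eigenvalues) : Mat m) =
      diagonal (RCLike.ofReal ∘ Real.exp ∘ hY.eigenvalues) := by
    rw [exp_diagonal]
    congr 1
    funext i
    simp [← Complex.exp_eq_exp_ℂ, Complex.ofReal_exp]
  rw [hexp, hY.cfc_eq, IsHermitian.cfc, Unitary.conjStarAlgAut_apply, ← hdiag]
  conv_lhs => rw [hY.spectral_theorem, Unitary.conjStarAlgAut_apply]
  exact exp_units_conj (Unitary.toUnits hY.eigenvectorUnitary) _

lemma matLog_eq_cfc (hX : X.IsHermitian) : matLog X = cfc Real.log X := by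
  rw [matLog, dif_pos hX, hX.cfc_eq]
  rfl

noncomputable def partitionFn (Y : Mat m) : ℝ := 1 + (matExp Y).trace.re

lemma partitionFn_eq_sum (hY : Y.IsHermitian) :
    partitionFn Y = 1 + ∑ j, Real.exp (hY.eigenvalues j) := by
  rw [partitionFn, matExp_eq_cfc hY, ← hY.re_trace_cfc]
  rfl

lemma partitionFn_pos (hY : Y.IsHermitian) : 0 < partitionFn Y := by
  rw [partitionFn_eq_sum hY]
  positivity

lemma Gam_eq_cfc (hY : Y.IsHermitian) :
    Gam Y = cfc (fun r => (partitionFn Y)⁻¹ * Real.exp r) Y := by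
  change (partitionFn Y)⁻¹ • matExp Y = _
  rw [matExp_eq_cfc hY, cfc_const_mul _ _ Y (Y.finite_real_spectrum.continuousOn _)]

lemma Gam_posDef (hY : Y.IsHermitian) : (Gam Y).PosDef := by
  have hZ := partitionFn_pos hY
  rw [Gam_eq_cfc hY]
  exact hY.posDef_cfc fun x => by positivity

lemma re_trace_Gam (hY : Y.IsHermitian) : (Gam Y).trace.re = 1 - (partitionFn Y)⁻¹ := by
  rw [Gam_eq_cfc hY, ← RCLike.re_to_complex, hY.re_trace_cfc, ← mul_sum, eq_sub_iff_add_eq,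
    ← mul_add_one, add_comm, ← partitionFn_eq_sum hY, inv_mul_cancel₀ (partitionFn_pos hY).ne']

lemma Gam_mem_spectra (hY : Y.IsHermitian) : Gam Y ∈ spectra m := by
  refine ⟨(Gam_posDef hY).posSemidef, ?_⟩
  rw [re_trace_Gam hY]
  linarith [inv_pos.mpr (partitionFn_pos hY)]

lemma cfc_log_Gam (hY : Y.IsHermitian) :
    cfc Real.log (Gam Y) = Y - algebraMap ℝ (Mat m) (Real.log (partitionFn Y)) := by
  have hZ := partitionFn_pos hY
  have hlog (r : ℝ) : Real.log ((partitionFn Y)⁻¹ * Real.exp r) = r - Real.log (partitionFn Y) := by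
    rw [Real.log_mul (inv_ne_zero hZ.ne') (Real.exp_pos r).ne', Real.log_inv, Real.log_exp]
    ring
  rw [Gam_eq_cfc hY, ← cfc_comp' Real.log _ Y ((Y.finite_real_spectrum.image _).continuousOn _)
    (Y.finite_real_spectrum.continuousOn _) hY.isSelfAdjoint]
  simp only [hlog]
  rw [cfc_sub (fun r => r) _ Y (Y.finite_real_spectrum.continuousOn _)
    (Y.finite_real_spectrum.continuousOn _), cfc_id' ℝ Y hY.isSelfAdjoint,
    cfc_const _ Y hY.isSelfAdjoint]

lemma log_partitionFn_sub_eq (hX : X.IsHermitian) (hY : Y.IsHermitian) :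
    Real.log (partitionFn Y) - ((Y * X).trace.re - vnEnt X) =
      relEntropy X (Gam Y) + (partitionFn Y)⁻¹ * klFun ((1 - X.trace.re) / (partitionFn Y)⁻¹) := by
  have hrel : relEntropy X (Gam Y) = (X * cfc Real.log X).trace.re - (X * Y).trace.re +
      Real.log (partitionFn Y) * X.trace.re - X.trace.re + (Gam Y).trace.re := by
    rw [relEntropy, cfc_log_Gam hY, Algebra.algebraMap_eq_smul_one, mul_sub, mul_smul_comm,
      Matrix.mul_one]
    simp only [trace_add, trace_sub, trace_smul, map_add, map_sub, RCLike.re_to_complex,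
      Complex.real_smul, Complex.re_ofReal_mul]
    ring
  rw [hrel, mul_klFun_div (inv_ne_zero (partitionFn_pos hY).ne'), vnEnt, matLog_eq_cfc hX,
    trace_mul_comm Y, re_trace_Gam hY, Real.log_inv]
  ring

lemma log_partitionFn_sub_nonneg (hX : X ∈ spectra m) (hY : Y.IsHermitian) :
    0 ≤ Real.log (partitionFn Y) - ((Y * X).trace.re - vnEnt X) := by
  rw [log_partitionFn_sub_eq hX.1.isHermitian hY]
  exact add_nonneg (relEntropy_nonneg hX.1 (Gam_posDef hY))
    (mul_klFun_div_nonneg (sub_nonneg.mpr hX.2) (inv_pos.mpr (partitionFn_pos hY)).le)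

lemma log_partitionFn_sub_eq_zero_iff (hX : X ∈ spectra m) (hY : Y.IsHermitian) :
    Real.log (partitionFn Y) - ((Y * X).trace.re - vnEnt X) = 0 ↔ X = Gam Y := by
  refine ⟨fun h => ?_, fun h => ?_⟩
  · have hkl := mul_klFun_div_nonneg (sub_nonneg.mpr hX.2) (inv_pos.mpr (partitionFn_pos hY)).le
    rw [log_partitionFn_sub_eq hX.1.isHermitian hY] at h
    exact (relEntropy_eq_zero_iff hX.1 (Gam_posDef hY)).mp
      (le_antisymm (by linarith) (relEntropy_nonneg hX.1 (Gam_posDef hY)))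
  · rw [log_partitionFn_sub_eq hX.1.isHermitian hY, h, relEntropy_self, re_trace_Gam hY,
      sub_sub_cancel, div_self (inv_ne_zero (partitionFn_pos hY).ne'), klFun_one, mul_zero,
      add_zero]

lemma hstar_eq_log_partitionFn (hY : Y.IsHermitian) : hstar Y = Real.log (partitionFn Y) := by
  have hle : ∀ r ∈ (fun X => (Y * X).trace.re - vnEnt X) '' spectra m,
      r ≤ Real.log (partitionFn Y) := by
    rintro r ⟨X, hX, rfl⟩
    exact sub_nonneg.mp (log_partitionFn_sub_nonneg hX hY)
  have hmem : Real.log (partitionFn Y) ∈ (fun X => (Y * X).trace.re - vnEnt X) '' spectra m :=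
    ⟨Gam Y, Gam_mem_spectra hY,
      (sub_eq_zero.mp ((log_partitionFn_sub_eq_zero_iff (Gam_mem_spectra hY) hY).mpr rfl)).symm⟩
  exact le_antisymm (csSup_le ⟨_, hmem⟩ hle) (le_csSup ⟨_, hle⟩ hmem)

end Gibbs

/-- For every `X ∈ 𝒟` and every Hermitian matrix `Y`, the Fenchel
coupling satisfies `F(X, Y) ≥ 0`, with equality if and only if `X = Γ(Y)`. -/
theorem fenchel_coupling_nonneg {m : ℕ} (X : Mat m) (hX : X ∈ spectra m)
    (Y : Mat m) (hY : Y.IsHermitian) :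
    0 ≤ Fen X Y ∧ (Fen X Y = 0 ↔ X = Gam Y) := by
  have hFen : Fen X Y = Real.log (partitionFn Y) - ((Y * X).trace.re - vnEnt X) := by
    rw [Fen, hstar_eq_log_partitionFn hY]
    ring
  rw [hFen]
  exact ⟨log_partitionFn_sub_nonneg hX hY, log_partitionFn_sub_eq_zero_iff hX hY⟩
end
end

section
/- Fix real constants P_c > 0 and P_max > 0 and a complex matrix H̃ ∈ ℂ^{N×M}. Then the energy-efficiency utility u(X) = [(P_c + (1 − tr X) P_max) / (P_c (P_c + P_max))] · log det( I + (P_c P_max / (P_c + (1 − tr X) P_max)) · H̃ X H̃† ) is a concave function of X on the spectrahedron {X ∈ ℂ^{M×M} : X ⪰ 0, tr X ≤ 1}. -/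
open Matrix
open scoped ComplexOrder

noncomputable section

/-- The energy-efficiency utility obtained from the Charnes–Cooper transformation:
`u(X) = [(P_c + (1 − tr X) P_max)/(P_c (P_c + P_max))] ·
  log det(I + (P_c P_max/(P_c + (1 − tr X) P_max)) · H̃ X H̃†)`. -/
noncomputable def eeUtility {m n : ℕ} (Pc Pmax : ℝ) (H : Matrix (Fin n) (Fin m) ℂ)
    (X : Matrix (Fin m) (Fin m) ℂ) : ℝ :=
  (Pc + (1 - X.trace.re) * Pmax) / (Pc * (Pc + Pmax)) *
    Real.log
      ((Matrix.det
          (1 + (Pc * Pmax / (Pc + (1 - X.trace.re) * Pmax)) •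
            (H * X * Hᴴ))).re)

/-!
With `t(X) = P_c + (1 - tr X) P_max` and `M(X) = t(X) I + P_c P_max H̃ X H̃†`, both affine in `X`,
the utility is `(P_c (P_c + P_max))⁻¹ · t · log det (M / t)`: the perspective of `log det`
evaluated at `(M(X), t(X))`. Now `log det = tr ∘ log` is concave on positive definite matrices
because the logarithm is operator concave, perspectives of concave functions are concave, and
concavity survives affine substitution.
-/

section Perspective

variable {𝕜 E : Type*} [Field 𝕜] [LinearOrder 𝕜] [IsStrictOrderedRing 𝕜] [AddCommGroup E]
  [Module 𝕜 E]

theorem ConcaveOn.perspective {s : Set E} {f : E → 𝕜} (hf : ConcaveOn 𝕜 s f) :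
    ConcaveOn 𝕜 {p : E × 𝕜 | 0 < p.2 ∧ p.2⁻¹ • p.1 ∈ s} fun p => p.2 * f (p.2⁻¹ • p.1) := by
  have key : ∀ ⦃x : E⦄ ⦃t : 𝕜⦄, 0 < t → t⁻¹ • x ∈ s → ∀ ⦃y : E⦄ ⦃u : 𝕜⦄, 0 < u →
      u⁻¹ • y ∈ s → ∀ ⦃a b : 𝕜⦄, 0 ≤ a → 0 ≤ b → a + b = 1 →
      0 < a * t + b * u ∧ (a * t + b * u)⁻¹ • (a • x + b • y) ∈ s ∧
        a * (t * f (t⁻¹ • x)) + b * (u * f (u⁻¹ • y))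
          ≤ (a * t + b * u) * f ((a * t + b * u)⁻¹ • (a • x + b • y)) := by
    intro x t ht hx y u hu hy a b ha hb hab
    set w := a * t + b * u
    have hw : 0 < w := by
      rcases ha.eq_or_lt with rfl | ha
      · simp_all [w]
      · positivity
    have hcomb : w⁻¹ • (a • x + b • y) = (a * t / w) • (t⁻¹ • x) + (b * u / w) • (u⁻¹ • y) := by
      simp only [smul_smul, smul_add]
      congr 2 <;> field_simp
    have hweights : a * t / w + b * u / w = 1 := by rw [← add_div, div_self hw.ne']
    have hat : 0 ≤ a * t / w := by positivity
    have hbu : 0 ≤ b * u / w := by positivity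
    refine ⟨hw, hcomb ▸ hf.1 hx hy hat hbu hweights, ?_⟩
    calc a * (t * f (t⁻¹ • x)) + b * (u * f (u⁻¹ • y))
        = w * ((a * t / w) • f (t⁻¹ • x) + (b * u / w) • f (u⁻¹ • y)) := by
          simp only [smul_eq_mul]; field_simp
      _ ≤ w * f (w⁻¹ • (a • x + b • y)) := by
          rw [hcomb]; exact mul_le_mul_of_nonneg_left (hf.2 hx hy hat hbu hweights) hw.le
  refine ⟨fun ⟨x, t⟩ ⟨ht, hx⟩ ⟨y, u⟩ ⟨hu, hy⟩ a b ha hb hab => ?_,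
    fun ⟨x, t⟩ ⟨ht, hx⟩ ⟨y, u⟩ ⟨hu, hy⟩ a b ha hb hab => ?_⟩
  · obtain ⟨hw, hmem, -⟩ := key ht hx hu hy ha hb hab
    exact ⟨by simpa using hw, by simpa using hmem⟩
  · simpa using (key ht hx hu hy ha hb hab).2.2

end Perspective

namespace Matrix

variable {m n : Type*} [Fintype m] [Fintype n] [DecidableEq n]

theorem IsHermitian.trace_cfc_s19 {𝕜 : Type*} [RCLike 𝕜] {A : Matrix n n 𝕜} (hA : A.IsHermitian)
    (f : ℝ → ℝ) : (cfc f A).trace = ∑ i, (f (hA.eigenvalues i) : 𝕜) := by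
  rw [hA.cfc_eq, IsHermitian.cfc, Unitary.conjStarAlgAut_apply, trace_mul_cycle,
    Unitary.coe_star_mul_self, one_mul, trace_diagonal]
  rfl

open scoped MatrixOrder Matrix.Norms.L2Operator

theorem PosDef.re_trace_log {A : Matrix n n ℂ} (hA : A.PosDef) :
    (CFC.log A).trace.re = Real.log A.det.re := by
  rw [CFC.log, hA.isHermitian.trace_cfc_s19, hA.isHermitian.det_eq_prod_eigenvalues,
    ← RCLike.ofReal_prod, ← RCLike.ofReal_sum]
  exact (Real.log_prod fun i _ => (hA.eigenvalues_pos i).ne').symm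

theorem concaveOn_re_trace_log :
    ConcaveOn ℝ {A : Matrix n n ℂ | A.PosDef} fun A => (CFC.log A).trace.re := by
  have hlog := CFC.concaveOn_log (A := Matrix n n ℂ)
  simp only [isStrictlyPositive_iff_posDef] at hlog
  refine ⟨hlog.1, fun A hA B hB a b ha hb hab => ?_⟩
  have htrace := (tracePositiveLinearMap n ℂ ℂ).monotone (hlog.2 hA hB ha hb hab)
  simpa [trace_add, trace_smul] using (Complex.le_def.1 htrace).1

theorem concaveOn_log_re_det :
    ConcaveOn ℝ {A : Matrix n n ℂ | A.PosDef} fun A => Real.log A.det.re :=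
  concaveOn_re_trace_log.congr fun _ hA => hA.re_trace_log

theorem convex_setOf_posSemidef_re_trace_le (r : ℝ) :
    Convex ℝ {X : Matrix m m ℂ | X.PosSemidef ∧ X.trace.re ≤ r} := by
  have hcone : Convex ℝ {X : Matrix m m ℂ | X.PosSemidef} :=
    fun A hA B hB a b ha hb _ => (hA.smul ha).add (hB.smul hb)
  exact hcone.inter <| convex_halfSpace_le (Complex.reLm.comp (traceLinearMap m ℝ ℂ)).isLinear r

end Matrix

section CharnesCooper

variable {m n : Type*} [Fintype m] [DecidableEq n] (Pc Pmax : ℝ) (H : Matrix n m ℂ)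

def charnesCooperMap : Matrix m m ℂ →ᵃ[ℝ] Matrix n n ℂ × ℝ where
  toFun X := ((Pc + (1 - X.trace.re) * Pmax) • (1 : Matrix n n ℂ) + (Pc * Pmax) • (H * X * Hᴴ),
    Pc + (1 - X.trace.re) * Pmax)
  linear :=
    { toFun X := (-(X.trace.re * Pmax) • (1 : Matrix n n ℂ) + (Pc * Pmax) • (H * X * Hᴴ),
        -(X.trace.re * Pmax))
      map_add' X Y := by
        simp only [trace_add, Complex.add_re, Matrix.mul_add, Matrix.add_mul, Prod.mk_add_mk,
          Prod.ext_iff]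
        exact ⟨by module, by ring⟩
      map_smul' c X := by
        simp only [trace_smul, Complex.smul_re, Matrix.mul_smul, Matrix.smul_mul, Prod.smul_mk,
          Prod.ext_iff, RingHom.id_apply]
        exact ⟨by module, by ring⟩ }
  map_vadd' X Y := by
    simp only [vadd_eq_add, trace_add, Complex.add_re, Matrix.mul_add, Matrix.add_mul,
      Prod.ext_iff, LinearMap.coe_mk, AddHom.coe_mk, Prod.mk_add_mk]
    exact ⟨by module, by ring⟩

theorem charnesCooperMap_apply (X : Matrix m m ℂ) :
    charnesCooperMap Pc Pmax H X =
      ((Pc + (1 - X.trace.re) * Pmax) • (1 : Matrix n n ℂ) + (Pc * Pmax) • (H * X * Hᴴ),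
        Pc + (1 - X.trace.re) * Pmax) :=
  rfl

theorem inv_smul_charnesCooperMap_fst {X : Matrix m m ℂ} (ht : Pc + (1 - X.trace.re) * Pmax ≠ 0) :
    (charnesCooperMap Pc Pmax H X).2⁻¹ • (charnesCooperMap Pc Pmax H X).1
      = 1 + (Pc * Pmax / (Pc + (1 - X.trace.re) * Pmax)) • (H * X * Hᴴ) := by
  rw [charnesCooperMap_apply, smul_add, smul_smul, smul_smul, inv_mul_cancel₀ ht, one_smul,
    div_eq_inv_mul]

end CharnesCooper

/-- For `P_c > 0`, `P_max > 0` and any complex channel matrix `H̃`, the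
energy-efficiency utility is concave on the spectrahedron `{X : X ⪰ 0, tr X ≤ 1}`. -/
theorem eeUtility_concaveOn {m n : ℕ} (Pc Pmax : ℝ) (hPc : 0 < Pc) (hPmax : 0 < Pmax)
    (H : Matrix (Fin n) (Fin m) ℂ) :
    ConcaveOn ℝ {X : Matrix (Fin m) (Fin m) ℂ | X.PosSemidef ∧ X.trace.re ≤ 1}
      (eeUtility Pc Pmax H) := by
  have hpersp := (Matrix.concaveOn_log_re_det (n := Fin n)).perspective.comp_affineMap
    (charnesCooperMap Pc Pmax H)
  have hpos : ∀ X ∈ {X : Matrix (Fin m) (Fin m) ℂ | X.PosSemidef ∧ X.trace.re ≤ 1},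
      0 < Pc + (1 - X.trace.re) * Pmax := fun X hX => by nlinarith [hX.2]
  have hdom : {X : Matrix (Fin m) (Fin m) ℂ | X.PosSemidef ∧ X.trace.re ≤ 1} ⊆
      charnesCooperMap Pc Pmax H ⁻¹' {p | 0 < p.2 ∧ p.2⁻¹ • p.1 ∈ {A | A.PosDef}} := by
    intro X hX
    refine ⟨hpos X hX, ?_⟩
    rw [Set.mem_ofPred_eq, inv_smul_charnesCooperMap_fst Pc Pmax H (hpos X hX).ne']
    exact PosDef.one.add_posSemidef ((hX.1.mul_mul_conjTranspose_same H).smul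
      (div_nonneg (mul_pos hPc hPmax).le (hpos X hX).le))
  refine ((hpersp.subset hdom (convex_setOf_posSemidef_re_trace_le 1)).smul
    (inv_nonneg.2 (by positivity : 0 ≤ Pc * (Pc + Pmax)))).congr fun X hX => ?_
  dsimp only [Function.comp_apply, smul_eq_mul]
  rw [inv_smul_charnesCooperMap_fst Pc Pmax H (hpos X hX).ne', charnesCooperMap_apply, eeUtility]
  ring
end
end
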